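/- Let $g$ and $c$ be positive integers and fix $r, s$ with $1 \le s < r \le g$. Then there is a constant $C$ depending only on $g$ and $c$ such that for all sufficiently large $z$, $\sum_{1 < h_1 < \cdots < h_g < z} \frac{1}{h_1 \cdots h_g} \prod_{p \mid (h_r - h_s)} \left(1 + \frac{1}{p}\right)^{c} \le C (\log z)^g$, where the $h_i$ run over integers and the product is over primes $p$ dividing $h_r - h_s$. -/

import Mathlib

open Filter Finset

section Helpers

lemma Ioo_nat_succ (a b : ℕ) : Finset.Ioo a (b+1) = Finset.Ioc a b := by
  ext x; simp [Nat.lt_succ_iff]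

lemma hsum_le_log (M : ℕ) (hM : 1 ≤ M) :
    ∑ m ∈ Finset.Ioo 1 (M+1), (m:ℝ)⁻¹ ≤ Real.log M := by
  induction M, hM using Nat.le_induction with
  | base =>
    rw [Ioo_nat_succ]
    simp
  | succ M hM ih =>
    rw [Ioo_nat_succ] at *
    rw [Finset.sum_Ioc_succ_top (by omega)]
    have hM0 : (0:ℝ) < M := by exact_mod_cast hM
    have h1 : Real.log (M:ℝ) - Real.log ((M:ℝ)+1) ≤ -(((M:ℝ)+1))⁻¹ := by
      have hx : (0:ℝ) < (M:ℝ)/((M:ℝ)+1) := by positivity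
      have h2 := Real.log_le_sub_one_of_pos hx
      rw [Real.log_div (by positivity) (by positivity)] at h2
      have heq : (M:ℝ)/((M:ℝ)+1) - 1 = -(((M:ℝ)+1))⁻¹ := by field_simp; ring
      linarith
    push_cast
    linarith

lemma sqrt_prod' (S : Finset ℕ) : Real.sqrt (∏ p ∈ S, (p:ℝ)) = ∏ p ∈ S, Real.sqrt p := by
  induction S using Finset.cons_induction with
  | empty => simp
  | cons a S ha ih =>
    rw [Finset.prod_cons, Finset.prod_cons, Real.sqrt_mul (by positivity), ih]

lemma pow_omega_le {K d : ℕ} (hK : 1 ≤ K) (hd : Squarefree d) :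
    (K:ℝ)^(d.primeFactors.card) ≤ (K:ℝ)^(K^2) * Real.sqrt d := by
  classical
  set S := d.primeFactors
  have hd0 : d ≠ 0 := hd.ne_zero
  have hK0 : (1:ℝ) ≤ (K:ℝ) := by exact_mod_cast hK
  have hsplit : S.filter (· < K^2) ∪ S.filter (fun p => ¬ p < K^2) = S :=
    Finset.filter_union_filter_not_eq _ S
  have hcard : S.card = (S.filter (· < K^2)).card + (S.filter (fun p => ¬ p < K^2)).card := by
    rw [← Finset.card_filter_add_card_filter_not (p := (· < K^2))]
  rw [hcard, pow_add]
  have h1 : (K:ℝ)^((S.filter (· < K^2)).card) ≤ (K:ℝ)^(K^2) := by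
    apply pow_le_pow_right₀ hK0
    calc (S.filter (· < K^2)).card ≤ (Finset.range (K^2)).card := by
          apply Finset.card_le_card
          intro p hp
          simp only [Finset.mem_filter] at hp
          exact Finset.mem_range.2 hp.2
    _ = K^2 := Finset.card_range _
  have h2 : (K:ℝ)^((S.filter (fun p => ¬ p < K^2)).card) ≤ Real.sqrt d := by
    rw [← Finset.prod_const]
    calc ∏ p ∈ S.filter (fun p => ¬ p < K^2), (K:ℝ)
        ≤ ∏ p ∈ S.filter (fun p => ¬ p < K^2), Real.sqrt p := by
          apply Finset.prod_le_prod (fun _ _ => by positivity)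
          intro p hp
          simp only [Finset.mem_filter, not_lt] at hp
          rw [show (K:ℝ) = Real.sqrt ((K:ℝ)^2) by rw [Real.sqrt_sq (by positivity)]]
          apply Real.sqrt_le_sqrt
          exact_mod_cast hp.2
    _ = Real.sqrt (∏ p ∈ S.filter (fun p => ¬ p < K^2), (p:ℝ)) := (sqrt_prod' _).symm
    _ ≤ Real.sqrt d := by
        apply Real.sqrt_le_sqrt
        have hdvd : (∏ p ∈ S.filter (fun p => ¬ p < K^2), p) ∣ d := by
          calc (∏ p ∈ S.filter (fun p => ¬ p < K^2), p) ∣ ∏ p ∈ S, p :=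
            Finset.prod_dvd_prod_of_subset _ _ _ (Finset.filter_subset _ _)
          _ = d := Nat.prod_primeFactors_of_squarefree hd
        have := Nat.le_of_dvd (Nat.pos_of_ne_zero hd0) hdvd
        rw [← Nat.cast_prod]
        exact_mod_cast this
  calc (K:ℝ)^((S.filter (· < K^2)).card) * (K:ℝ)^((S.filter (fun p => ¬ p < K^2)).card)
      ≤ (K:ℝ)^(K^2) * Real.sqrt d := by
        apply mul_le_mul h1 h2 (by positivity) (by positivity)

lemma fubini_two {g : ℕ} (s r : Fin g) (hsr : s ≠ r) (t : Finset ℕ)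
    (φ : ℕ → ℝ) (Ψ : ℕ → ℕ → ℝ) :
    ∑ h ∈ Fintype.piFinset (fun _ : Fin g => t), (∏ i, φ (h i)) * Ψ (h s) (h r)
      = (∑ x ∈ t, φ x)^(g-2) * ∑ a ∈ t, ∑ b ∈ t, φ a * φ b * Ψ a b := by
  classical
  set L : ℝ := ∑ x ∈ t, φ x with hL
  set u : ℕ → ℕ → Fin g → ℕ → ℝ := fun a b i x =>
    if i = s then (if x = a then φ x else 0)
    else if i = r then (if x = b then φ x else 0) else φ x with hu
  have hcard : ((Finset.univ.erase s).erase r).card = g - 2 := by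
    rw [Finset.card_erase_of_mem (Finset.mem_erase.2 ⟨hsr.symm, Finset.mem_univ r⟩),
      Finset.card_erase_of_mem (Finset.mem_univ s)]
    simp only [Finset.card_univ, Fintype.card_fin]
    omega
  -- step 2
  have step2 : ∀ a ∈ t, ∀ b ∈ t, (∏ i, ∑ x ∈ t, u a b i x) = φ a * φ b * L^(g-2) := by
    intro a ha b hb
    have h1 : ∀ i ∈ (Finset.univ.erase s).erase r, (∑ x ∈ t, u a b i x) = L := by
      intro i hi
      simp only [Finset.mem_erase] at hi
      simp [hu, hi.1, hi.2.1, hL]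
    rw [← Finset.mul_prod_erase Finset.univ _ (Finset.mem_univ s),
      ← Finset.mul_prod_erase _ _ (Finset.mem_erase.2 ⟨hsr.symm, Finset.mem_univ r⟩),
      Finset.prod_congr rfl h1, Finset.prod_const, hcard]
    have hs' : (∑ x ∈ t, u a b s x) = φ a := by
      simp [hu, ha]
    have hr' : (∑ x ∈ t, u a b r x) = φ b := by
      simp [hu, Ne.symm hsr, hb]
    rw [hs', hr']; ring
  -- step 3
  have step3 : ∀ h ∈ Fintype.piFinset (fun _ : Fin g => t),
      ∑ a ∈ t, ∑ b ∈ t, Ψ a b * ∏ i, u a b i (h i)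
        = (∏ i, φ (h i)) * Ψ (h s) (h r) := by
    intro h hh
    rw [Fintype.mem_piFinset] at hh
    have hub : ∀ a b, (∏ i, u a b i (h i)) =
        (if h s = a then (1:ℝ) else 0) * (if h r = b then (1:ℝ) else 0) * ∏ i, φ (h i) := by
      intro a b
      have h1 : ∀ i ∈ (Finset.univ.erase s).erase r, u a b i (h i) = φ (h i) := by
        intro i hi
        simp only [Finset.mem_erase] at hi
        simp [hu, hi.1, hi.2.1]
      rw [← Finset.mul_prod_erase Finset.univ _ (Finset.mem_univ s),
        ← Finset.mul_prod_erase _ (fun i => u a b i (h i))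
          (Finset.mem_erase.2 ⟨hsr.symm, Finset.mem_univ r⟩),
        Finset.prod_congr rfl h1]
      rw [← Finset.mul_prod_erase Finset.univ (fun i => φ (h i)) (Finset.mem_univ s),
        ← Finset.mul_prod_erase _ (fun i => φ (h i))
          (Finset.mem_erase.2 ⟨hsr.symm, Finset.mem_univ r⟩)]
      simp only [hu, if_pos rfl, if_neg hsr.symm]
      split_ifs <;> ring
    have inner : ∀ a, ∑ b ∈ t, Ψ a b * ∏ i, u a b i (h i)
        = Ψ a (h r) * ((if h s = a then (1:ℝ) else 0) * ∏ i, φ (h i)) := by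
      intro a
      rw [Finset.sum_eq_single_of_mem (h r) (hh r)]
      · rw [hub, show (if h r = h r then (1:ℝ) else 0) = 1 from if_pos rfl]; ring
      · intro b hb hbne
        rw [hub, show (if h r = b then (1:ℝ) else 0) = 0 from
          if_neg (fun hx => hbne hx.symm)]; ring
    rw [Finset.sum_congr rfl (fun a _ => inner a),
      Finset.sum_eq_single_of_mem (h s) (hh s)]
    · rw [show (if h s = h s then (1:ℝ) else 0) = 1 from if_pos rfl]; ring
    · intro a ha hane
      rw [show (if h s = a then (1:ℝ) else 0) = 0 from
        if_neg (fun hx => hane hx.symm)]; ring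
  calc ∑ h ∈ Fintype.piFinset (fun _ : Fin g => t), (∏ i, φ (h i)) * Ψ (h s) (h r)
      = ∑ h ∈ Fintype.piFinset (fun _ : Fin g => t),
          ∑ a ∈ t, ∑ b ∈ t, Ψ a b * ∏ i, u a b i (h i) :=
        (Finset.sum_congr rfl (fun h hh => (step3 h hh).symm))
    _ = ∑ a ∈ t, ∑ h ∈ Fintype.piFinset (fun _ : Fin g => t),
          ∑ b ∈ t, Ψ a b * ∏ i, u a b i (h i) := Finset.sum_comm
    _ = ∑ a ∈ t, ∑ b ∈ t, ∑ h ∈ Fintype.piFinset (fun _ : Fin g => t),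
          Ψ a b * ∏ i, u a b i (h i) :=
        Finset.sum_congr rfl (fun a _ => Finset.sum_comm)
    _ = ∑ a ∈ t, ∑ b ∈ t, Ψ a b * ∑ h ∈ Fintype.piFinset (fun _ : Fin g => t),
          ∏ i, u a b i (h i) := by
        simp_rw [Finset.mul_sum]
    _ = ∑ a ∈ t, ∑ b ∈ t, Ψ a b * (φ a * φ b * L^(g-2)) := by
        refine Finset.sum_congr rfl (fun a ha => Finset.sum_congr rfl (fun b hb => ?_))
        rw [← Finset.prod_univ_sum, step2 a ha b hb]
    _ = L^(g-2) * ∑ a ∈ t, ∑ b ∈ t, φ a * φ b * Ψ a b := by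
        rw [Finset.mul_sum]
        refine Finset.sum_congr rfl (fun a ha => ?_)
        rw [Finset.mul_sum]
        exact Finset.sum_congr rfl (fun b hb => by ring)

lemma one_add_pow_le {x : ℝ} (hx0 : 0 ≤ x) (hx1 : x ≤ 1) (c : ℕ) :
    (1+x)^c ≤ 1 + ((2:ℝ)^c - 1)*x := by
  induction c with
  | zero => simp
  | succ c ih =>
    have h2 : (1:ℝ) ≤ 2^c := one_le_pow₀ (by norm_num)
    have hx2 : x^2 ≤ x := by nlinarith
    calc (1+x)^(c+1) = (1+x)^c * (1+x) := by ring
    _ ≤ (1 + ((2:ℝ)^c - 1)*x) * (1+x) := by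
        apply mul_le_mul_of_nonneg_right ih (by linarith)
    _ ≤ 1 + ((2:ℝ)^(c+1) - 1)*x := by ring_nf; nlinarith

lemma squarefree_prod_primes {T : Finset ℕ} (hT : ∀ p ∈ T, p.Prime) :
    Squarefree (∏ p ∈ T, p) := by
  classical
  induction T using Finset.cons_induction with
  | empty => simpa using squarefree_one
  | cons a T ha ih =>
    rw [Finset.prod_cons]
    have hap : a.Prime := hT a (Finset.mem_cons_self a T)
    have hcop : Nat.Coprime a (∏ p ∈ T, p) := by
      apply Nat.Coprime.prod_right
      intro p hp
      exact (Nat.coprime_primes hap (hT p (Finset.mem_cons_of_mem hp))).2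
        (fun h => ha (h ▸ hp))
    rw [Nat.squarefree_mul hcop]
    exact ⟨hap.squarefree, ih (fun p hp => hT p (Finset.mem_cons_of_mem hp))⟩

noncomputable def cf (c d : ℕ) : ℝ :=
  if Squarefree d then ((2:ℝ)^c - 1) ^ d.primeFactors.card else 0

lemma cf_nonneg (c d : ℕ) : 0 ≤ cf c d := by
  unfold cf
  have : (1:ℝ) ≤ 2^c := one_le_pow₀ (by norm_num)
  split_ifs
  · exact pow_nonneg (by linarith) _
  · exact le_refl 0

lemma weight_le_divisor_sum (c N n : ℕ) (hn : 1 ≤ n) (hnN : n ≤ N) :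
    ∏ p ∈ n.primeFactors, (1 + 1/(p:ℝ))^c
      ≤ ∑ d ∈ Finset.Icc 1 N, (cf c d / d) * (if d ∣ n then 1 else 0) := by
  classical
  set k : ℝ := (2:ℝ)^c - 1 with hk
  have hk0 : 0 ≤ k := by
    have : (1:ℝ) ≤ 2^c := one_le_pow₀ (by norm_num)
    simp [hk]; linarith
  have step1 : ∏ p ∈ n.primeFactors, (1 + 1/(p:ℝ))^c
      ≤ ∏ p ∈ n.primeFactors, (k * (1/(p:ℝ)) + 1) := by
    apply Finset.prod_le_prod
    · intro p hp; positivity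
    · intro p hp
      have hp2 : 2 ≤ p := (Nat.prime_of_mem_primeFactors hp).two_le
      have hp0 : (0:ℝ) < p := by positivity
      have h1 : 1/(p:ℝ) ≤ 1 := by
        rw [div_le_one hp0]; exact_mod_cast Nat.one_le_iff_ne_zero.2 (by omega)
      have := one_add_pow_le (x := 1/(p:ℝ)) (by positivity) h1 c
      linarith
  have step2 : ∏ p ∈ n.primeFactors, (k * (1/(p:ℝ)) + 1)
      = ∑ T ∈ n.primeFactors.powerset, ∏ p ∈ T, (k * (1/(p:ℝ))) := by
    rw [Finset.prod_add]
    refine Finset.sum_congr rfl (fun T hT => ?_)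
    simp
  -- value of each term
  have key : ∀ T ∈ n.primeFactors.powerset,
      ∏ p ∈ T, (k * (1/(p:ℝ))) = cf c (∏ p ∈ T, p) / ((∏ p ∈ T, p : ℕ) : ℝ) := by
    intro T hT
    rw [Finset.mem_powerset] at hT
    have hTp : ∀ p ∈ T, p.Prime := fun p hp => Nat.prime_of_mem_primeFactors (hT hp)
    have hsq : Squarefree (∏ p ∈ T, p) := squarefree_prod_primes hTp
    have hpf : (∏ p ∈ T, p).primeFactors = T := Nat.primeFactors_prod hTp
    rw [show cf c (∏ p ∈ T, p) = k ^ T.card by rw [cf, if_pos hsq, hpf]]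
    rw [Finset.prod_mul_distrib, Finset.prod_const]
    rw [Nat.cast_prod]
    rw [div_eq_mul_inv, ← Finset.prod_inv_distrib]
    congr 1
    exact Finset.prod_congr rfl (fun p _ => one_div _)
  have inj : Set.InjOn (fun T : Finset ℕ => ∏ p ∈ T, p) (n.primeFactors.powerset : Set (Finset ℕ)) := by
    intro T1 h1 T2 h2 he
    have h1' : ∀ p ∈ T1, p.Prime := fun p hp =>
      Nat.prime_of_mem_primeFactors (Finset.mem_powerset.1 h1 hp)
    have h2' : ∀ p ∈ T2, p.Prime := fun p hp =>
      Nat.prime_of_mem_primeFactors (Finset.mem_powerset.1 h2 hp)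
    have he' : (∏ p ∈ T1, p) = ∏ p ∈ T2, p := he
    rw [← Nat.primeFactors_prod h1', ← Nat.primeFactors_prod h2', he']
  have himg : (n.primeFactors.powerset).image (fun T => ∏ p ∈ T, p)
      ⊆ (Finset.Icc 1 N).filter (· ∣ n) := by
    intro d hd
    rw [Finset.mem_image] at hd
    obtain ⟨T, hT, rfl⟩ := hd
    rw [Finset.mem_powerset] at hT
    have hdvd : (∏ p ∈ T, p) ∣ n :=
      dvd_trans (Finset.prod_dvd_prod_of_subset _ _ _ hT) (Nat.prod_primeFactors_dvd n)
    have hle : (∏ p ∈ T, p) ≤ n := Nat.le_of_dvd hn hdvd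
    have hpos : 1 ≤ ∏ p ∈ T, p :=
      Nat.pos_of_ne_zero (fun h0 => by
        have := Nat.eq_zero_of_zero_dvd (h0 ▸ hdvd); omega)
    rw [Finset.mem_filter, Finset.mem_Icc]
    exact ⟨⟨hpos, le_trans hle hnN⟩, hdvd⟩
  calc ∏ p ∈ n.primeFactors, (1 + 1/(p:ℝ))^c
      ≤ ∑ T ∈ n.primeFactors.powerset, ∏ p ∈ T, (k * (1/(p:ℝ))) := by
        rw [← step2]; exact step1
    _ = ∑ T ∈ n.primeFactors.powerset, cf c (∏ p ∈ T, p) / ((∏ p ∈ T, p : ℕ) : ℝ) :=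
        Finset.sum_congr rfl key
    _ = ∑ d ∈ (n.primeFactors.powerset).image (fun T => ∏ p ∈ T, p), cf c d / (d:ℝ) :=
        by rw [Finset.sum_image (fun T h1 S h2 he => inj h1 h2 he)]
    _ ≤ ∑ d ∈ (Finset.Icc 1 N).filter (· ∣ n), cf c d / (d:ℝ) := by
        apply Finset.sum_le_sum_of_subset_of_nonneg himg
        intro d _ _
        have := cf_nonneg c d
        positivity
    _ = ∑ d ∈ Finset.Icc 1 N, (cf c d / d) * (if d ∣ n then 1 else 0) := by
        rw [Finset.sum_filter]
        refine Finset.sum_congr rfl (fun d _ => ?_)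
        split_ifs <;> simp

lemma sum_inv_filter_le (N d a : ℕ) (hd : 1 ≤ d) :
    ∑ b ∈ (Finset.Ioo 1 N).filter (fun b => a < b ∧ d ∣ b - a), (b:ℝ)⁻¹
      ≤ ∑ j ∈ Finset.Icc 1 N, ((d:ℝ)*(j:ℝ))⁻¹ := by
  classical
  set s := (Finset.Ioo 1 N).filter (fun b => a < b ∧ d ∣ b - a) with hs
  have hmem : ∀ b ∈ s, 1 < b ∧ b < N ∧ a < b ∧ d ∣ b - a := by
    intro b hb
    rw [hs, Finset.mem_filter, Finset.mem_Ioo] at hb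
    exact ⟨hb.1.1, hb.1.2, hb.2.1, hb.2.2⟩
  have key : ∀ b ∈ s, (b:ℝ)⁻¹ ≤ ((d:ℝ)*(((b-a)/d : ℕ):ℝ))⁻¹ := by
    intro b hb
    obtain ⟨h1, h2, h3, h4⟩ := hmem b hb
    have hdj : d * ((b-a)/d) = b - a := Nat.mul_div_cancel' h4
    have hba : 1 ≤ b - a := by omega
    have hle : d * ((b-a)/d) ≤ b := by omega
    have hpos : 0 < d * ((b-a)/d) := by omega
    rw [show (d:ℝ)*(((b-a)/d : ℕ):ℝ) = ((d * ((b-a)/d) : ℕ):ℝ) by push_cast; ring]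
    apply inv_anti₀
    · exact_mod_cast hpos
    · exact_mod_cast hle
  calc ∑ b ∈ s, (b:ℝ)⁻¹ ≤ ∑ b ∈ s, ((d:ℝ)*(((b-a)/d : ℕ):ℝ))⁻¹ :=
        Finset.sum_le_sum key
    _ = ∑ j ∈ s.image (fun b => (b-a)/d), ((d:ℝ)*(j:ℝ))⁻¹ := by
        rw [Finset.sum_image]
        intro b1 hb1 b2 hb2 he
        obtain ⟨_, _, h13, h14⟩ := hmem b1 hb1
        obtain ⟨_, _, h23, h24⟩ := hmem b2 hb2
        have e1 : d * ((b1-a)/d) = b1 - a := Nat.mul_div_cancel' h14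
        have e2 : d * ((b2-a)/d) = b2 - a := Nat.mul_div_cancel' h24
        have : b1 - a = b2 - a := by rw [← e1, ← e2]; exact congrArg (d * ·) he
        omega
    _ ≤ ∑ j ∈ Finset.Icc 1 N, ((d:ℝ)*(j:ℝ))⁻¹ := by
        apply Finset.sum_le_sum_of_subset_of_nonneg
        · intro j hj
          rw [Finset.mem_image] at hj
          obtain ⟨b, hb, rfl⟩ := hj
          obtain ⟨h1, h2, h3, h4⟩ := hmem b hb
          have hdj : d * ((b-a)/d) = b - a := Nat.mul_div_cancel' h4
          rw [Finset.mem_Icc]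
          constructor
          · have hdle : d ≤ b - a := Nat.le_of_dvd (by omega) h4
            exact Nat.div_pos hdle (by omega)
          · have : (b-a)/d ≤ b - a := Nat.div_le_self _ _
            omega
        · intro j _ _; positivity

end Helpers

theorem sum_chains_diff_weight_le (g c : ℕ) (hg : 0 < g) (hc : 0 < c)
    (s r : Fin g) (hsr : s < r) :
    ∃ C : ℝ, 0 < C ∧ ∀ᶠ z : ℝ in atTop,
      (∑' h : {h : Fin g → ℕ // StrictMono h ∧ ∀ i, 1 < h i ∧ (h i : ℝ) < z},
          (∏ i, (h.1 i : ℝ))⁻¹ * ∏ p ∈ (h.1 r - h.1 s).primeFactors, (1 + 1 / (p : ℝ)) ^ c)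
        ≤ C * (Real.log z) ^ g := by
  classical
  have hg2 : 2 ≤ g := by
    have h1 : (s:ℕ) < (r:ℕ) := hsr
    have h2 : (r:ℕ) < g := r.isLt
    omega
  set K : ℕ := 2^c with hK
  have hK1 : 1 ≤ K := Nat.one_le_two_pow
  have hZsummable : Summable (fun n : ℕ => (n:ℝ) ^ (-(3:ℝ)/2)) :=
    Real.summable_nat_rpow.mpr (by norm_num)
  set Z : ℝ := ∑' n : ℕ, (n:ℝ) ^ (-(3:ℝ)/2) with hZ
  have hZ0 : 0 ≤ Z := tsum_nonneg (fun n => Real.rpow_nonneg (Nat.cast_nonneg n) _)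
  set A : ℝ := (K:ℝ)^(K^2) * Z with hA
  have hA0 : 0 ≤ A := mul_nonneg (by positivity) hZ0
  refine ⟨1 + 3*A, by linarith, ?_⟩
  rw [Filter.eventually_atTop]
  refine ⟨3, fun z hz => ?_⟩
  have hz0 : (0:ℝ) < z := by linarith
  have hlog1 : 1 ≤ Real.log z := by
    rw [Real.le_log_iff_exp_le hz0]
    have := Real.exp_one_lt_d9
    linarith
  have hlog0 : 0 ≤ Real.log z := by linarith
  set N : ℕ := ⌊z⌋₊ + 1 with hN
  have hfloor1 : 1 ≤ ⌊z⌋₊ := Nat.le_floor (by push_cast; linarith)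
  set t : Finset ℕ := Finset.Ioo 1 N with ht
  set φ : ℕ → ℝ := fun x => (x:ℝ)⁻¹ with hφ
  have hφ0 : ∀ x, 0 ≤ φ x := fun x => by simp only [hφ]; positivity
  set L : ℝ := ∑ x ∈ t, φ x with hL
  have hL0 : 0 ≤ L := Finset.sum_nonneg (fun x _ => hφ0 x)
  have hLlog : L ≤ Real.log z := by
    have h1 : L ≤ Real.log (⌊z⌋₊ : ℝ) := by
      simp only [hL, ht, hφ, hN]
      exact hsum_le_log ⌊z⌋₊ hfloor1
    have h2 : Real.log (⌊z⌋₊:ℝ) ≤ Real.log z :=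
      Real.log_le_log (by exact_mod_cast hfloor1) (Nat.floor_le hz0.le)
    linarith
  set H : ℝ := ∑ j ∈ Finset.Icc 1 N, (j:ℝ)⁻¹ with hH
  have hH0 : 0 ≤ H := Finset.sum_nonneg fun j _ => by positivity
  have hHlog : H ≤ 3 * Real.log z := by
    have hsplit : Finset.Icc 1 N = insert 1 (Finset.Ioo 1 (N+1)) := by
      ext x
      simp only [Finset.mem_Icc, Finset.mem_insert, Finset.mem_Ioo]
      omega
    have h1 : ∑ m ∈ Finset.Ioo 1 (N+1), (m:ℝ)⁻¹ ≤ Real.log N := hsum_le_log N (by omega)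
    have h2 : Real.log (N:ℝ) ≤ 1 + Real.log z := by
      have hNz : (N:ℝ) ≤ 2*z := by
        have := Nat.floor_le hz0.le
        simp only [hN]
        push_cast
        linarith
      have h3 : Real.log (N:ℝ) ≤ Real.log (2*z) :=
        Real.log_le_log (by positivity) hNz
      rw [Real.log_mul (by norm_num) (ne_of_gt hz0)] at h3
      have h4 : Real.log 2 ≤ 1 := by
        rw [Real.log_le_iff_le_exp (by norm_num)]
        have := Real.add_one_le_exp 1
        linarith
      linarith
    rw [hH, hsplit, Finset.sum_insert (by simp)]
    push_cast
    linarith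
  set W : (Fin g → ℕ) → ℝ := fun h =>
    (∏ i, ((h i : ℕ):ℝ))⁻¹ * ∏ p ∈ (h r - h s).primeFactors, (1 + 1/(p:ℝ))^c with hW
  have hW0 : ∀ h, 0 ≤ W h := by
    intro h
    simp only [hW]
    apply mul_nonneg
    · positivity
    · exact Finset.prod_nonneg fun p _ => by positivity
  set Ψ : ℕ → ℕ → ℝ := fun a b =>
    if a < b then ∑ d ∈ Finset.Icc 1 N, (cf c d / d) * (if d ∣ b - a then 1 else 0)
    else 1 with hΨ
  apply tsum_le_of_sum_le' (mul_nonneg (by linarith) (pow_nonneg hlog0 g))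
  intro F
  have hrw : ∀ x : {h : Fin g → ℕ // StrictMono h ∧ ∀ i, 1 < h i ∧ ((h i : ℕ):ℝ) < z},
      (∏ i, (x.1 i : ℝ))⁻¹ * ∏ p ∈ (x.1 r - x.1 s).primeFactors, (1 + 1 / (p : ℝ)) ^ c
        = W x.1 := fun x => by simp only [hW, one_div]
  rw [Finset.sum_congr rfl (fun x _ => hrw x)]
  have hmemP : ∀ x : {h : Fin g → ℕ // StrictMono h ∧ ∀ i, 1 < h i ∧ ((h i : ℕ):ℝ) < z},
      x ∈ F → x.1 ∈ Fintype.piFinset (fun _ : Fin g => t) := by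
    intro x _
    rw [Fintype.mem_piFinset]
    intro i
    rw [ht, Finset.mem_Ioo]
    refine ⟨(x.2.2 i).1, ?_⟩
    have hle : x.1 i ≤ ⌊z⌋₊ := Nat.le_floor (x.2.2 i).2.le
    omega
  have main2 : ∑ h ∈ Fintype.piFinset (fun _ : Fin g => t), W h
      ≤ (1 + 3*A) * Real.log z ^ g := by
    calc ∑ h ∈ Fintype.piFinset (fun _ : Fin g => t), W h
        ≤ ∑ h ∈ Fintype.piFinset (fun _ : Fin g => t), (∏ i, φ (h i)) * Ψ (h s) (h r) := by
          apply Finset.sum_le_sum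
          intro h hh
          rw [Fintype.mem_piFinset] at hh
          have hfle : ∏ p ∈ (h r - h s).primeFactors, (1 + 1/(p:ℝ))^c ≤ Ψ (h s) (h r) := by
            simp only [hΨ]
            by_cases hab : h s < h r
            · rw [if_pos hab]
              have hmr := hh r
              rw [ht, Finset.mem_Ioo] at hmr
              exact weight_le_divisor_sum c N (h r - h s) (by omega) (by omega)
            · rw [if_neg hab]
              have h0 : h r - h s = 0 := by omega
              rw [h0]
              simp
          have hWh : W h = (∏ i, φ (h i)) *
              ∏ p ∈ (h r - h s).primeFactors, (1 + 1/(p:ℝ))^c := by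
            simp only [hW, hφ]
            rw [Finset.prod_inv_distrib]
          rw [hWh]
          exact mul_le_mul_of_nonneg_left hfle (Finset.prod_nonneg fun i _ => hφ0 _)
      _ = L^(g-2) * ∑ a ∈ t, ∑ b ∈ t, φ a * φ b * Ψ a b :=
          fubini_two s r (ne_of_lt hsr) t φ Ψ
      _ ≤ (1 + 3*A) * Real.log z ^ g := by
          set Δ : ℕ → ℕ → ℝ := fun a b =>
            ∑ d ∈ Finset.Icc 1 N, (cf c d / d) * (if a < b ∧ d ∣ b - a then 1 else 0) with hΔ
          have hΔ0 : ∀ a b, 0 ≤ Δ a b := fun a b =>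
            Finset.sum_nonneg fun d _ => mul_nonneg
              (div_nonneg (cf_nonneg c d) (Nat.cast_nonneg d)) (by split_ifs <;> norm_num)
          have hΨle : ∀ a b, Ψ a b ≤ 1 + Δ a b := by
            intro a b
            simp only [hΨ, hΔ]
            by_cases hab : a < b
            · rw [if_pos hab]
              have heq : ∑ d ∈ Finset.Icc 1 N, (cf c d / d) * (if d ∣ b - a then 1 else 0)
                  = ∑ d ∈ Finset.Icc 1 N, (cf c d / d) *
                      (if a < b ∧ d ∣ b - a then 1 else 0) := by
                refine Finset.sum_congr rfl (fun d _ => ?_)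
                congr 1
                simp [hab]
              rw [heq]
              linarith [hΔ0 a b]
            · rw [if_neg hab]
              have := hΔ0 a b
              simp only [hΔ] at this
              linarith
          -- bound the T-part
          have hTbound : ∑ a ∈ t, ∑ b ∈ t, φ a * φ b * Δ a b ≤ A * (L*H) := by
            have e1 : ∀ a b, φ a * φ b * Δ a b = ∑ d ∈ Finset.Icc 1 N,
                (cf c d / d) * (φ a * (φ b * (if a < b ∧ d ∣ b - a then 1 else 0))) := by
              intro a b
              simp only [hΔ]
              rw [Finset.mul_sum]
              exact Finset.sum_congr rfl fun d _ => by ring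
            calc ∑ a ∈ t, ∑ b ∈ t, φ a * φ b * Δ a b
                = ∑ a ∈ t, ∑ b ∈ t, ∑ d ∈ Finset.Icc 1 N,
                    (cf c d / d) * (φ a * (φ b * (if a < b ∧ d ∣ b - a then 1 else 0))) :=
                  Finset.sum_congr rfl fun a _ => Finset.sum_congr rfl fun b _ => e1 a b
              _ = ∑ a ∈ t, ∑ d ∈ Finset.Icc 1 N, ∑ b ∈ t,
                    (cf c d / d) * (φ a * (φ b * (if a < b ∧ d ∣ b - a then 1 else 0))) :=
                  Finset.sum_congr rfl fun a _ => Finset.sum_comm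
              _ = ∑ d ∈ Finset.Icc 1 N, ∑ a ∈ t, ∑ b ∈ t,
                    (cf c d / d) * (φ a * (φ b * (if a < b ∧ d ∣ b - a then 1 else 0))) :=
                  Finset.sum_comm
              _ ≤ ∑ d ∈ Finset.Icc 1 N, (cf c d * ((d:ℝ)⁻¹*(d:ℝ)⁻¹)) * (L * H) := by
                  apply Finset.sum_le_sum
                  intro d hd
                  rw [Finset.mem_Icc] at hd
                  have hd1 : 1 ≤ d := hd.1
                  have hcfd0 : 0 ≤ cf c d / d :=
                    div_nonneg (cf_nonneg c d) (Nat.cast_nonneg d)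
                  have hb : ∀ a, ∑ b ∈ t, φ b * (if a < b ∧ d ∣ b - a then 1 else 0)
                      ≤ (d:ℝ)⁻¹ * H := by
                    intro a
                    have heqf : ∑ b ∈ t, φ b * (if a < b ∧ d ∣ b - a then 1 else 0)
                        = ∑ b ∈ t.filter (fun b => a < b ∧ d ∣ b - a), φ b := by
                      rw [Finset.sum_filter]
                      exact Finset.sum_congr rfl fun b _ => by split_ifs <;> simp
                    rw [heqf]
                    have hstep : ∑ b ∈ t.filter (fun b => a < b ∧ d ∣ b - a), φ b
                        ≤ ∑ j ∈ Finset.Icc 1 N, ((d:ℝ)*(j:ℝ))⁻¹ := by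
                      simp only [ht, hφ]
                      exact sum_inv_filter_le N d a hd1
                    have heqH : ∑ j ∈ Finset.Icc 1 N, ((d:ℝ)*(j:ℝ))⁻¹ = (d:ℝ)⁻¹ * H := by
                      rw [hH, Finset.mul_sum]
                      exact Finset.sum_congr rfl fun j _ => by rw [mul_inv]
                    linarith
                  calc ∑ a ∈ t, ∑ b ∈ t,
                        (cf c d / d) * (φ a * (φ b * (if a < b ∧ d ∣ b - a then 1 else 0)))
                      = ∑ a ∈ t, (cf c d / d) * (φ a *
                          ∑ b ∈ t, φ b * (if a < b ∧ d ∣ b - a then 1 else 0)) := by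
                        refine Finset.sum_congr rfl fun a _ => ?_
                        rw [Finset.mul_sum, Finset.mul_sum]
                    _ ≤ ∑ a ∈ t, (cf c d / d) * (φ a * ((d:ℝ)⁻¹ * H)) := by
                        apply Finset.sum_le_sum
                        intro a _
                        apply mul_le_mul_of_nonneg_left _ hcfd0
                        exact mul_le_mul_of_nonneg_left (hb a) (hφ0 a)
                    _ = ∑ a ∈ t, (cf c d * ((d:ℝ)⁻¹*(d:ℝ)⁻¹) * H) * φ a :=
                        Finset.sum_congr rfl fun a _ => by rw [div_eq_mul_inv]; ring
                    _ = (cf c d * ((d:ℝ)⁻¹*(d:ℝ)⁻¹) * H) * ∑ a ∈ t, φ a := by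
                        rw [← Finset.mul_sum]
                    _ = (cf c d * ((d:ℝ)⁻¹*(d:ℝ)⁻¹)) * (L * H) := by
                        rw [← hL]; ring
              _ = (∑ d ∈ Finset.Icc 1 N, cf c d * ((d:ℝ)⁻¹*(d:ℝ)⁻¹)) * (L * H) :=
                  (Finset.sum_mul _ _ _).symm
              _ ≤ A * (L * H) := by
                  apply mul_le_mul_of_nonneg_right _ (mul_nonneg hL0 hH0)
                  have hkK : ((2:ℝ)^c - 1) ≤ (K:ℝ) := by
                    rw [hK]; push_cast; linarith
                  have hk0' : (0:ℝ) ≤ (2:ℝ)^c - 1 := by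
                    have : (1:ℝ) ≤ 2^c := one_le_pow₀ (by norm_num)
                    linarith
                  calc ∑ d ∈ Finset.Icc 1 N, cf c d * ((d:ℝ)⁻¹*(d:ℝ)⁻¹)
                      ≤ ∑ d ∈ Finset.Icc 1 N, (K:ℝ)^(K^2) * (d:ℝ)^(-(3:ℝ)/2) := by
                        apply Finset.sum_le_sum
                        intro d hd
                        rw [Finset.mem_Icc] at hd
                        have hd0 : (0:ℝ) < d := by exact_mod_cast hd.1
                        have hcf : cf c d ≤ (K:ℝ)^(K^2) * Real.sqrt d := by
                          rw [cf]
                          split_ifs with hsq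
                          · calc ((2:ℝ)^c - 1)^d.primeFactors.card
                                ≤ (K:ℝ)^d.primeFactors.card :=
                                  pow_le_pow_left₀ hk0' hkK _
                            _ ≤ (K:ℝ)^(K^2) * Real.sqrt d := pow_omega_le hK1 hsq
                          · positivity
                        have hrpow : Real.sqrt d * ((d:ℝ)⁻¹*(d:ℝ)⁻¹) = (d:ℝ)^(-(3:ℝ)/2) := by
                          rw [Real.sqrt_eq_rpow, ← Real.rpow_neg_one (d:ℝ),
                            ← Real.rpow_add hd0, ← Real.rpow_add hd0]
                          norm_num
                        calc cf c d * ((d:ℝ)⁻¹*(d:ℝ)⁻¹)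
                            ≤ ((K:ℝ)^(K^2) * Real.sqrt d) * ((d:ℝ)⁻¹*(d:ℝ)⁻¹) :=
                              mul_le_mul_of_nonneg_right hcf (by positivity)
                          _ = (K:ℝ)^(K^2) * (Real.sqrt d * ((d:ℝ)⁻¹*(d:ℝ)⁻¹)) := by ring
                          _ = (K:ℝ)^(K^2) * (d:ℝ)^(-(3:ℝ)/2) := by rw [hrpow]
                    _ = (K:ℝ)^(K^2) * ∑ d ∈ Finset.Icc 1 N, (d:ℝ)^(-(3:ℝ)/2) :=
                        (Finset.mul_sum _ _ _).symm
                    _ ≤ (K:ℝ)^(K^2) * Z := by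
                        apply mul_le_mul_of_nonneg_left _ (by positivity)
                        rw [hZ]
                        exact Summable.sum_le_tsum _ (fun d _ =>
                          Real.rpow_nonneg (Nat.cast_nonneg d) _) hZsummable
                    _ = A := hA.symm
          have hDS : ∑ a ∈ t, ∑ b ∈ t, φ a * φ b * Ψ a b ≤ L*L + A*(L*H) := by
            calc ∑ a ∈ t, ∑ b ∈ t, φ a * φ b * Ψ a b
                ≤ ∑ a ∈ t, ∑ b ∈ t, (φ a * φ b + φ a * φ b * Δ a b) := by
                  apply Finset.sum_le_sum
                  intro a _
                  apply Finset.sum_le_sum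
                  intro b _
                  have h1 : 0 ≤ φ a * φ b := mul_nonneg (hφ0 a) (hφ0 b)
                  have h2 := hΨle a b
                  nlinarith
              _ = (∑ a ∈ t, ∑ b ∈ t, φ a * φ b) + ∑ a ∈ t, ∑ b ∈ t, φ a * φ b * Δ a b := by
                  rw [← Finset.sum_add_distrib]
                  exact Finset.sum_congr rfl fun a _ => by rw [← Finset.sum_add_distrib]
              _ ≤ L*L + A*(L*H) := by
                  apply add_le_add _ hTbound
                  apply le_of_eq
                  rw [hL, Finset.sum_mul_sum]
          calc L^(g-2) * ∑ a ∈ t, ∑ b ∈ t, φ a * φ b * Ψ a b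
              ≤ L^(g-2) * (L*L + A*(L*H)) :=
                mul_le_mul_of_nonneg_left hDS (pow_nonneg hL0 _)
            _ ≤ (Real.log z)^(g-2) * (Real.log z * Real.log z
                  + A * (Real.log z * (3 * Real.log z))) := by
                apply mul_le_mul (pow_le_pow_left₀ hL0 hLlog _)
                · apply add_le_add
                  · exact mul_le_mul hLlog hLlog hL0 hlog0
                  · apply mul_le_mul_of_nonneg_left _ hA0
                    exact mul_le_mul hLlog hHlog hH0 hlog0
                · apply add_nonneg (mul_nonneg hL0 hL0)
                  exact mul_nonneg hA0 (mul_nonneg hL0 hH0)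
                · exact pow_nonneg hlog0 _
            _ = (1 + 3*A) * Real.log z ^ g := by
                have hgg : Real.log z ^ (g-2) * (Real.log z * Real.log z)
                    = Real.log z ^ g := by
                  have hp : Real.log z ^ g = Real.log z ^ (g-2) * Real.log z ^ 2 := by
                    rw [← pow_add]
                    congr 1
                    omega
                  rw [hp]; ring
                calc (Real.log z)^(g-2) * (Real.log z * Real.log z
                      + A * (Real.log z * (3 * Real.log z)))
                    = Real.log z ^ (g-2) * (Real.log z * Real.log z) * (1 + 3*A) := by ring
                  _ = (1 + 3*A) * Real.log z ^ g := by rw [hgg]; ring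
  calc ∑ x ∈ F, W x.1
      = ∑ h ∈ F.image Subtype.val, W h := by
        rw [Finset.sum_image (fun x _ y _ h => Subtype.ext h)]
    _ ≤ ∑ h ∈ Fintype.piFinset (fun _ : Fin g => t), W h := by
        apply Finset.sum_le_sum_of_subset_of_nonneg
        · intro h hh
          rw [Finset.mem_image] at hh
          obtain ⟨x, hx, rfl⟩ := hh
          exact hmemP x hx
        · intro h _ _
          exact hW0 h
    _ ≤ (1 + 3*A) * Real.log z ^ g := main2
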